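/- arXiv:2604.27732 — 3 statements merged into one kernel-verified Lean document; each statement's English description precedes it below -/
import Mathlib

section
/- Let I = J+1, λ ∈ [0,1], let C_{i,I−i} > 0 and π_i > 0 be fixed positive reals for 1 ≤ i ≤ I. For a vector of positive reals f = (f_0,…,f_{J−1}), set β_j(f) = ∏_{k=j}^{J−1} f_k^{−1} (so β_J(f) = 1), and define F(f) = Σ_{i=1}^I Ĉ^GCC_{i,J}(λ; f), the total GCC predictor computed from the pattern β(f). Then for every t ∈ {0,…,J−1} and every positive f, F is partially differentiable in f_t and satisfies f_t · ∂F/∂f_t (f) = Σ_{i=I−t}^{I} β_{I−i}(f) κ̂_i^GCC(λ; f) π_i + Σ_{i=1}^{I} (1 − β_{I−i}(f)) κ̂_i^GCC(λ; f) π_i · ( Σ_{k=I−t}^{I} β_{I−k}(f) π_k λ^{|i−k|} / Σ_{k=1}^{I} β_{I−k}(f) π_k λ^{|i−k|} ); equivalently, the logarithmic sensitivity q_t(λ) = ∂_{log f_t} log F(f) equals this expression divided by F(f). -/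
/-!
Replacing `f_t` by `x` multiplies `β_j` for every `j ≤ t` by `u = f_t / x` and leaves the other
`β_j` unchanged, so `F(f[t := x])` is the total GCC predictor of the rescaled pattern, a function
of `u` alone. At `x = f_t` we have `u = 1` and `x ∂ₓ = -u ∂ᵤ`, so `f_t ∂F/∂f_t` is minus the
derivative in `u` at `u = 1`. Each `β_j` is affine in `u`, and the quotient rule for
`κ̂ᵢ(u) = Nᵢ / Sᵢ(u)` produces the share of the rescaled terms `k ≥ I - t` in the denominator
`Sᵢ`.
-/

open Finset

/-- Development pattern induced by chain-ladder factors: β_j(f) = ∏_{k=j}^{J-1} f_k⁻¹. -/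
noncomputable def betaCL (J : ℕ) (f : ℕ → ℝ) (j : ℕ) : ℝ :=
  ∏ k ∈ Ico j J, (f k)⁻¹

/-- GCC claims-ratio estimator computed from the pattern β(f); here `C l` denotes the
diagonal observation C_{l,I-l}. -/
noncomputable def kappaGCCf (I J : ℕ) (C π : ℕ → ℝ) (lam : ℝ) (f : ℕ → ℝ) (i : ℕ) : ℝ :=
  (∑ l ∈ Icc 1 I, C l * lam ^ Nat.dist i l) /
    (∑ k ∈ Icc 1 I, betaCL J f (I - k) * π k * lam ^ Nat.dist i k)

/-- Total GCC predictor F(f) = Σᵢ Ĉᵢ^GCC(λ; f). -/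
noncomputable def totalGCC (I J : ℕ) (C π : ℕ → ℝ) (lam : ℝ) (f : ℕ → ℝ) : ℝ :=
  ∑ i ∈ Icc 1 I,
    (C i + (1 - betaCL J f (I - i)) * kappaGCCf I J C π lam f i * π i)

noncomputable def gccWeight (I : ℕ) (π : ℕ → ℝ) (lam : ℝ) (β : ℕ → ℝ) (s : Finset ℕ)
    (i : ℕ) : ℝ :=
  ∑ k ∈ s, β (I - k) * π k * lam ^ Nat.dist i k

/-- `kappaGCCf` and `totalGCC` for an arbitrary pattern `β`; by definition
`totalGCC I J C π lam f = gccTotal I C π lam (betaCL J f)`. -/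
noncomputable def gccKappa (I : ℕ) (C π : ℕ → ℝ) (lam : ℝ) (β : ℕ → ℝ) (i : ℕ) : ℝ :=
  (∑ l ∈ Icc 1 I, C l * lam ^ Nat.dist i l) / gccWeight I π lam β (Icc 1 I) i

noncomputable def gccTotal (I : ℕ) (C π : ℕ → ℝ) (lam : ℝ) (β : ℕ → ℝ) : ℝ :=
  ∑ i ∈ Icc 1 I, (C i + (1 - β (I - i)) * gccKappa I C π lam β i * π i)

def rescaleUpTo (t : ℕ) (u : ℝ) (β : ℕ → ℝ) (j : ℕ) : ℝ :=
  if j ≤ t then u * β j else β j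

@[simp]
lemma rescaleUpTo_one (t : ℕ) (β : ℕ → ℝ) : rescaleUpTo t 1 β = β := by
  funext j
  simp [rescaleUpTo]

lemma hasDerivAt_rescaleUpTo (t : ℕ) (β : ℕ → ℝ) (j : ℕ) (u : ℝ) :
    HasDerivAt (fun u => rescaleUpTo t u β j) (if j ≤ t then β j else 0) u := by
  unfold rescaleUpTo
  split_ifs
  · simpa using (hasDerivAt_id u).mul_const (β j)
  · exact hasDerivAt_const u (β j)

lemma hasDerivAt_gccWeight_rescaleUpTo (I t : ℕ) (π : ℕ → ℝ) (lam : ℝ) (β : ℕ → ℝ)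
    (s : Finset ℕ) (i : ℕ) (u : ℝ) :
    HasDerivAt (fun u => gccWeight I π lam (rescaleUpTo t u β) s i)
      (gccWeight I π lam β (s.filter (I - t ≤ ·)) i) u := by
  have hterm : ∀ k ∈ s, HasDerivAt (fun u => rescaleUpTo t u β (I - k) * π k * lam ^ Nat.dist i k)
      ((if I - t ≤ k then β (I - k) else 0) * π k * lam ^ Nat.dist i k) u := by
    intro k _
    have hiff : I - k ≤ t ↔ I - t ≤ k := by omega
    simpa only [hiff] using
      ((hasDerivAt_rescaleUpTo t β (I - k) u).mul_const (π k)).mul_const (lam ^ Nat.dist i k)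
  refine (HasDerivAt.fun_sum hterm).congr_deriv ?_
  simp only [gccWeight, sum_filter, ite_mul, zero_mul]

lemma Icc_one_filter_sub_le {I t : ℕ} (ht : t < I) :
    (Icc 1 I).filter (I - t ≤ ·) = Icc (I - t) I := by
  ext k
  simp only [mem_filter, mem_Icc]
  omega

lemma gccWeight_pos {I : ℕ} {π : ℕ → ℝ} {lam : ℝ} {β : ℕ → ℝ} (hlam : 0 ≤ lam)
    (hπ : ∀ k ∈ Icc 1 I, 0 < π k) (hβ : ∀ j, 0 < β j) {i : ℕ} (hi : i ∈ Icc 1 I) :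
    0 < gccWeight I π lam β (Icc 1 I) i := by
  refine sum_pos' (fun k hk => by have := hπ k hk; have := hβ (I - k); positivity) ⟨i, hi, ?_⟩
  simpa using mul_pos (hβ (I - i)) (hπ i hi)

lemma hasDerivAt_gccSummand_rescaleUpTo {I t : ℕ} (ht : t < I) (C π : ℕ → ℝ) (lam : ℝ)
    (β : ℕ → ℝ) (i : ℕ) (hS : gccWeight I π lam β (Icc 1 I) i ≠ 0) :
    HasDerivAt
      (fun u => C i + (1 - rescaleUpTo t u β (I - i)) *
        gccKappa I C π lam (rescaleUpTo t u β) i * π i)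
      (-((if I - t ≤ i then β (I - i) * gccKappa I C π lam β i * π i else 0)
        + (1 - β (I - i)) * gccKappa I C π lam β i * π i *
          (gccWeight I π lam β (Icc (I - t) I) i / gccWeight I π lam β (Icc 1 I) i))) 1 := by
  have hweight := hasDerivAt_gccWeight_rescaleUpTo I t π lam β (Icc 1 I) i 1
  rw [Icc_one_filter_sub_le ht] at hweight
  have hkappa := (hasDerivAt_const (1 : ℝ) (∑ l ∈ Icc 1 I, C l * lam ^ Nat.dist i l)).fun_div
    hweight (by simpa using hS)
  have hsummand := (((hasDerivAt_rescaleUpTo t β (I - i) 1).const_sub 1).fun_mul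
    hkappa).fun_mul (hasDerivAt_const 1 (π i)) |>.const_add (C i)
  refine hsummand.congr_deriv ?_
  have hiff : I - i ≤ t ↔ I - t ≤ i := by omega
  simp only [rescaleUpTo_one, gccKappa, hiff]
  split_ifs <;> field_simp <;> ring

lemma hasDerivAt_gccTotal_rescaleUpTo {I t : ℕ} (ht : t < I) (C π : ℕ → ℝ) (lam : ℝ)
    (β : ℕ → ℝ) (hS : ∀ i ∈ Icc 1 I, gccWeight I π lam β (Icc 1 I) i ≠ 0) :
    HasDerivAt (fun u => gccTotal I C π lam (rescaleUpTo t u β))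
      (-(∑ i ∈ Icc (I - t) I, β (I - i) * gccKappa I C π lam β i * π i
        + ∑ i ∈ Icc 1 I, (1 - β (I - i)) * gccKappa I C π lam β i * π i *
          (gccWeight I π lam β (Icc (I - t) I) i / gccWeight I π lam β (Icc 1 I) i))) 1 := by
  refine (HasDerivAt.fun_sum fun i hi =>
    hasDerivAt_gccSummand_rescaleUpTo ht C π lam β i (hS i hi)).congr_deriv ?_
  rw [sum_neg_distrib, sum_add_distrib, ← sum_filter, Icc_one_filter_sub_le ht]

lemma betaCL_pos {J : ℕ} {f : ℕ → ℝ} (hf : ∀ k < J, 0 < f k) (j : ℕ) : 0 < betaCL J f j :=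
  prod_pos fun k hk => inv_pos.2 (hf k (mem_Ico.1 hk).2)

lemma betaCL_update {J t : ℕ} {f : ℕ → ℝ} (ht : t < J) (hft : f t ≠ 0) (x : ℝ) :
    betaCL J (Function.update f t x) = rescaleUpTo t (f t * x⁻¹) (betaCL J f) := by
  funext j
  simp only [betaCL, rescaleUpTo]
  split_ifs with hj
  · have htj : t ∈ Ico j J := mem_Ico.2 ⟨hj, ht⟩
    rw [← mul_prod_erase _ _ htj, ← mul_prod_erase _ (fun k => (f k)⁻¹) htj,
      Function.update_self, prod_congr rfl fun k hk =>
        congrArg Inv.inv (Function.update_of_ne (ne_of_mem_erase hk) x f)]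
    field_simp
  · exact prod_congr rfl fun k hk =>
      congrArg Inv.inv (Function.update_of_ne (by have := (mem_Ico.1 hk).1; omega) x f)

theorem gcc_error_propagation_sensitivity_general
    (I J : ℕ) (hIJ : I = J + 1)
    (lam : ℝ) (hlam : lam ∈ Set.Icc (0 : ℝ) 1)
    (C π : ℕ → ℝ)
    (hπ : ∀ i ∈ Icc 1 I, 0 < π i)
    (f : ℕ → ℝ) (hf : ∀ k < J, 0 < f k)
    (t : ℕ) (ht : t < J) :
    ∃ D : ℝ,
      HasDerivAt (fun x => totalGCC I J C π lam (Function.update f t x)) D (f t) ∧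
      f t * D
        = ∑ i ∈ Icc (I - t) I, betaCL J f (I - i) * kappaGCCf I J C π lam f i * π i
          + ∑ i ∈ Icc 1 I,
              (1 - betaCL J f (I - i)) * kappaGCCf I J C π lam f i * π i *
                ((∑ k ∈ Icc (I - t) I, betaCL J f (I - k) * π k * lam ^ Nat.dist i k) /
                  (∑ k ∈ Icc 1 I, betaCL J f (I - k) * π k * lam ^ Nat.dist i k)) := by
  have hft : f t ≠ 0 := (hf t ht).ne'
  have hS : ∀ i ∈ Icc 1 I, gccWeight I π lam (betaCL J f) (Icc 1 I) i ≠ 0 := fun i hi =>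
    (gccWeight_pos hlam.1 hπ (betaCL_pos hf) hi).ne'
  have hG := hasDerivAt_gccTotal_rescaleUpTo (t := t) (by omega) C π lam (betaCL J f) hS
  have hu : HasDerivAt (fun x => f t * x⁻¹) (-(f t)⁻¹) (f t) :=
    ((hasDerivAt_inv hft).const_mul (f t)).congr_deriv (by field_simp)
  have hfun : (fun x => totalGCC I J C π lam (Function.update f t x))
      = (fun u => gccTotal I C π lam (rescaleUpTo t u (betaCL J f))) ∘ (fun x => f t * x⁻¹) :=
    funext fun x => congrArg (gccTotal I C π lam) (betaCL_update ht hft x)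
  refine ⟨_, hfun ▸ HasDerivAt.comp_of_eq (f t) hG hu (mul_inv_cancel₀ hft).symm, ?_⟩
  field_simp
  rfl

/-- error-propagation theorem: the total GCC predictor F is partially
differentiable in each chain-ladder factor f_t, and f_t · ∂F/∂f_t equals the stated
expression; dividing by F(f) gives the logarithmic sensitivity q_t(λ). -/
theorem gcc_error_propagation_sensitivity
    (I J : ℕ) (hIJ : I = J + 1)
    (lam : ℝ) (hlam : lam ∈ Set.Icc (0 : ℝ) 1)
    (C π : ℕ → ℝ)
    (hC : ∀ i ∈ Icc 1 I, 0 < C i) (hπ : ∀ i ∈ Icc 1 I, 0 < π i)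
    (f : ℕ → ℝ) (hf : ∀ k < J, 0 < f k)
    (t : ℕ) (ht : t < J) :
    ∃ D : ℝ,
      HasDerivAt (fun x => totalGCC I J C π lam (Function.update f t x)) D (f t) ∧
      f t * D
        = ∑ i ∈ Icc (I - t) I, betaCL J f (I - i) * kappaGCCf I J C π lam f i * π i
          + ∑ i ∈ Icc 1 I,
              (1 - betaCL J f (I - i)) * kappaGCCf I J C π lam f i * π i *
                ((∑ k ∈ Icc (I - t) I, betaCL J f (I - k) * π k * lam ^ Nat.dist i k) /
                  (∑ k ∈ Icc 1 I, betaCL J f (I - k) * π k * lam ^ Nat.dist i k)) :=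
  gcc_error_propagation_sensitivity_general I J hIJ lam hlam C π hπ f hf t ht
end

section
/- Let I = J+1, let C_{i,I−i} > 0, π_i > 0, and β_0,…,β_J > 0 with β_J = 1, and for λ ∈ (0,1] and t ∈ {0,…,J−1} define q_t(λ) = [ Σ_{i=I−t}^{I} β_{I−i} κ̂_i^GCC(λ) π_i + Σ_{i=1}^{I} (1 − β_{I−i}) κ̂_i^GCC(λ) π_i · ( Σ_{k=I−t}^{I} β_{I−k} π_k λ^{|i−k|} / Σ_{k=1}^{I} β_{I−k} π_k λ^{|i−k|} ) ] / Σ_{i=1}^{I} Ĉ^GCC_{i,J}(λ). Then as λ → 0 from the right, q_t(λ) converges and lim_{λ↓0} q_t(λ) = Σ_{i=I−t}^{I} Ĉ^CL_{i,J} / Σ_{i=1}^{I} Ĉ^CL_{i,J}, where Ĉ^CL_{i,J} = C_{i,I−i}/β_{I−i}. -/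
open Finset

/-- Generalized Cape Cod claims-ratio estimator κ̂ᵢ^GCC(λ); here `C i` denotes the
diagonal observation C_{i,I-i}. -/
noncomputable def kappaGCC (I : ℕ) (C π β : ℕ → ℝ) (lam : ℝ) (i : ℕ) : ℝ :=
  ∑ l ∈ Icc 1 I,
    (β (I - l) * π l * lam ^ Nat.dist i l /
      ∑ k ∈ Icc 1 I, β (I - k) * π k * lam ^ Nat.dist i k) *
      (C l / (β (I - l) * π l))

/-- Generalized Cape Cod ultimate-claim predictor Ĉᵢ^GCC(λ). -/
noncomputable def predGCC (I : ℕ) (C π β : ℕ → ℝ) (lam : ℝ) (i : ℕ) : ℝ :=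
  C i + (1 - β (I - i)) * kappaGCC I C π β lam i * π i

/-- The GCC logarithmic sensitivity q_t(λ) from the error-propagation theorem. -/
noncomputable def qGCC (I : ℕ) (C π β : ℕ → ℝ) (t : ℕ) (lam : ℝ) : ℝ :=
  (∑ i ∈ Icc (I - t) I, β (I - i) * kappaGCC I C π β lam i * π i
    + ∑ i ∈ Icc 1 I,
        (1 - β (I - i)) * kappaGCC I C π β lam i * π i *
          ((∑ k ∈ Icc (I - t) I, β (I - k) * π k * lam ^ Nat.dist i k) /
            (∑ k ∈ Icc 1 I, β (I - k) * π k * lam ^ Nat.dist i k))) /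
    ∑ i ∈ Icc 1 I, predGCC I C π β lam i

/-!
At `λ = 0` the weights `λ^|i-k|` collapse to the Kronecker delta `δ_{ik}`, so every smoothed
quantity reduces to its individual counterpart: `κ̂ᵢ^GCC(0) = κ̂ᵢ`, `Ĉᵢ^GCC(0) = Ĉᵢ^CL`, and the
numerator of `q_t(0)` is `Σ_{i ≥ I-t} Ĉᵢ^CL`. All denominators stay nonzero at `λ = 0` (they
become `β_{I-i} πᵢ` and `Σ Ĉᵢ^CL`), so `q_t` is continuous there and the one-sided limit is
`q_t(0)`.
-/

lemma sum_mul_zero_pow_dist {R : Type*} [Semiring R] (s : Finset ℕ) (f : ℕ → R) (i : ℕ) :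
    ∑ k ∈ s, f k * 0 ^ Nat.dist i k = if i ∈ s then f i else 0 := by
  have hdelta : ∀ k, f k * 0 ^ Nat.dist i k = if i = k then f k else 0 := fun k => by
    by_cases hik : i = k
    · simp [hik, Nat.dist_self]
    · simp [hik, zero_pow (Nat.dist_pos_of_ne hik).ne']
  simp only [hdelta, sum_ite_eq]

section AtZero

variable {I : ℕ} {C π β : ℕ → ℝ}

lemma kappaGCC_zero (hw : ∀ l ∈ Icc 1 I, β (I - l) * π l ≠ 0) {i : ℕ} (hi : i ∈ Icc 1 I) :
    kappaGCC I C π β 0 i = C i / (β (I - i) * π i) := by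
  rw [kappaGCC, sum_mul_zero_pow_dist, if_pos hi, sum_eq_single_of_mem i hi]
  · rw [Nat.dist_self, pow_zero, mul_one, div_self (hw i hi), one_mul]
  · intro l _ hli
    rw [zero_pow (Nat.dist_pos_of_ne hli.symm).ne', mul_zero, zero_div, zero_mul]

lemma continuousAt_kappaGCC_zero (hw : ∀ l ∈ Icc 1 I, β (I - l) * π l ≠ 0) {i : ℕ}
    (hi : i ∈ Icc 1 I) : ContinuousAt (fun lam => kappaGCC I C π β lam i) 0 := by
  have hden : ∑ k ∈ Icc 1 I, β (I - k) * π k * (0 : ℝ) ^ Nat.dist i k ≠ 0 := by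
    rw [sum_mul_zero_pow_dist, if_pos hi]
    exact hw i hi
  unfold kappaGCC
  fun_prop (disch := exact hden)

lemma kappaGCC_zero_mul (hβ : ∀ l ∈ Icc 1 I, β (I - l) ≠ 0) (hπ : ∀ l ∈ Icc 1 I, π l ≠ 0)
    {i : ℕ} (hi : i ∈ Icc 1 I) :
    kappaGCC I C π β 0 i * π i = C i / β (I - i) := by
  have := hπ i hi
  rw [kappaGCC_zero (fun l hl => mul_ne_zero (hβ l hl) (hπ l hl)) hi]
  field_simp

lemma predGCC_zero (hβ : ∀ l ∈ Icc 1 I, β (I - l) ≠ 0) (hπ : ∀ l ∈ Icc 1 I, π l ≠ 0)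
    {i : ℕ} (hi : i ∈ Icc 1 I) :
    predGCC I C π β 0 i = C i / β (I - i) := by
  have := hβ i hi
  rw [predGCC, mul_assoc, kappaGCC_zero_mul hβ hπ hi]
  field_simp
  ring

lemma qGCC_zero (hβ : ∀ l ∈ Icc 1 I, β (I - l) ≠ 0) (hπ : ∀ l ∈ Icc 1 I, π l ≠ 0)
    {t : ℕ} (ht : t < I) :
    qGCC I C π β t 0
      = (∑ i ∈ Icc (I - t) I, C i / β (I - i)) / ∑ i ∈ Icc 1 I, C i / β (I - i) := by
  have hsub : Icc (I - t) I ⊆ Icc 1 I := Icc_subset_Icc_left (by omega)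
  have hIBNR : ∀ i ∈ Icc 1 I,
      (1 - β (I - i)) * kappaGCC I C π β 0 i * π i *
          ((∑ k ∈ Icc (I - t) I, β (I - k) * π k * (0 : ℝ) ^ Nat.dist i k) /
            ∑ k ∈ Icc 1 I, β (I - k) * π k * (0 : ℝ) ^ Nat.dist i k)
        = if i ∈ Icc (I - t) I then (1 - β (I - i)) * (C i / β (I - i)) else 0 := by
    intro i hi
    have := mul_ne_zero (hβ i hi) (hπ i hi)
    rw [sum_mul_zero_pow_dist, sum_mul_zero_pow_dist, if_pos hi, mul_assoc _ _ (π i),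
      kappaGCC_zero_mul hβ hπ hi]
    split_ifs <;> simp [div_self this]
  rw [qGCC, sum_congr rfl hIBNR, sum_ite_mem, inter_eq_right.mpr hsub, ← sum_add_distrib,
    sum_congr rfl fun i hi => predGCC_zero hβ hπ hi]
  congr 1
  refine sum_congr rfl fun i hi => ?_
  rw [mul_assoc, kappaGCC_zero_mul hβ hπ (hsub hi)]
  ring

lemma continuousAt_qGCC_zero (hw : ∀ l ∈ Icc 1 I, β (I - l) * π l ≠ 0) {t : ℕ} (ht : t < I)
    (hden : ∑ i ∈ Icc 1 I, predGCC I C π β 0 i ≠ 0) :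
    ContinuousAt (qGCC I C π β t) 0 := by
  have hsub : Icc (I - t) I ⊆ Icc 1 I := Icc_subset_Icc_left (by omega)
  have hkappa := fun i (hi : i ∈ Icc 1 I) => continuousAt_kappaGCC_zero (C := C) hw hi
  refine ContinuousAt.div (.add ?_ ?_) ?_ hden
  · refine tendsto_finsetSum _ fun i hi => ?_
    exact (continuousAt_const.mul (hkappa i (hsub hi))).mul continuousAt_const
  · refine tendsto_finsetSum _ fun i hi => ?_
    have hden_i : ∑ k ∈ Icc 1 I, β (I - k) * π k * (0 : ℝ) ^ Nat.dist i k ≠ 0 := by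
      rw [sum_mul_zero_pow_dist, if_pos hi]
      exact hw i hi
    exact ((continuousAt_const.mul (hkappa i hi)).mul continuousAt_const).mul
      (by fun_prop (disch := exact hden_i))
  · refine tendsto_finsetSum _ fun i hi => ?_
    exact continuousAt_const.add ((continuousAt_const.mul (hkappa i hi)).mul continuousAt_const)

end AtZero

theorem gcc_sensitivity_limit_lambda_zero_general
    (I J : ℕ) (hIJ : I = J + 1)
    (C π β : ℕ → ℝ)
    (hC : ∀ i ∈ Icc 1 I, 0 < C i)
    (hπ : ∀ i ∈ Icc 1 I, 0 < π i)
    (hβ : ∀ j ≤ J, 0 < β j)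
    (t : ℕ) (ht : t < J) :
    Filter.Tendsto (qGCC I C π β t) (nhdsWithin 0 (Set.Ioi 0))
      (nhds ((∑ i ∈ Icc (I - t) I, C i / β (I - i)) / (∑ i ∈ Icc 1 I, C i / β (I - i)))) := by
  have hβ' : ∀ i ∈ Icc 1 I, 0 < β (I - i) := fun i hi => hβ _ (by grind)
  have hβ0 : ∀ i ∈ Icc 1 I, β (I - i) ≠ 0 := fun i hi => (hβ' i hi).ne'
  have hπ0 : ∀ i ∈ Icc 1 I, π i ≠ 0 := fun i hi => (hπ i hi).ne'
  have htI : t < I := by omega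
  have hden : ∑ i ∈ Icc 1 I, predGCC I C π β 0 i ≠ 0 := by
    rw [sum_congr rfl fun i hi => predGCC_zero hβ0 hπ0 hi]
    exact (sum_pos (fun i hi => div_pos (hC i hi) (hβ' i hi)) ⟨1, by grind⟩).ne'
  have hcont := continuousAt_qGCC_zero (fun l hl => mul_ne_zero (hβ0 l hl) (hπ0 l hl)) htI hden
  rw [← qGCC_zero hβ0 hπ0 htI]
  exact hcont.continuousWithinAt.tendsto

/-- as λ ↓ 0 the GCC sensitivity q_t(λ) converges to the chain-ladder
sensitivity Σ_{i=I-t}^I Ĉ^CL_{i,J} / Σ_{i=1}^I Ĉ^CL_{i,J}, with Ĉ^CL_{i,J} = C_{i,I-i}/β_{I-i}. -/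
theorem gcc_sensitivity_limit_lambda_zero
    (I J : ℕ) (hIJ : I = J + 1)
    (C π β : ℕ → ℝ)
    (hC : ∀ i ∈ Icc 1 I, 0 < C i)
    (hπ : ∀ i ∈ Icc 1 I, 0 < π i)
    (hβ : ∀ j ≤ J, 0 < β j) (hβJ : β J = 1)
    (t : ℕ) (ht : t < J) :
    Filter.Tendsto (qGCC I C π β t) (nhdsWithin 0 (Set.Ioi 0))
      (nhds ((∑ i ∈ Icc (I - t) I, C i / β (I - i)) / (∑ i ∈ Icc 1 I, C i / β (I - i)))) :=
  gcc_sensitivity_limit_lambda_zero_general I J hIJ C π β hC hπ hβ t ht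
end

section
/- Let I = J+1, let u_1,…,u_I be real numbers and s_0,…,s_{J−1} be real numbers. Then Σ_{j=0}^{J−1} s_j ( Σ_{i=I−j}^{I} u_i )² = Σ_{i=I−J+1}^{I} u_i² ( Σ_{j=I−i}^{J−1} s_j ) + 2 Σ_{I−J+1 ≤ i < k ≤ I} u_i u_k ( Σ_{j=I−i}^{J−1} s_j ). In particular, taking u_i = Ĉ^CL_{i,J} and s_j = (σ̂_j²/f̂_j²)/Σ_{ℓ=1}^{I−j−1} C_{ℓ,j}, the error-propagation estimate (Σ_{i=1}^I Ĉ^CL_{i,J})² Σ_{j=0}^{J−1} q_j(0)² s_j, with q_j(0) = Σ_{i=I−j}^{I} Ĉ^CL_{i,J} / Σ_{i=1}^{I} Ĉ^CL_{i,J}, coincides with Mack's chain-ladder parameter estimation error estimate Σ_{i=I−J+1}^{I} (Ĉ^CL_{i,J})² Σ_{j=I−i}^{J−1} s_j + 2 Σ_{I−J+1 ≤ i < k ≤ I} Ĉ^CL_{i,J} Ĉ^CL_{k,J} Σ_{j=I−i}^{J−1} s_j. -/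
/-!
Expanding the square, `s j * (∑_{i ≥ I - j} u i) ^ 2` is a sum of the terms `u i ^ 2 * s j` and
`2 * u i * u k * s j` (`i < k`) over `i ≥ I - j`. Exchanging the order of summation over the
triangle `{(j, i) | j < J, I - j ≤ i ≤ I}` collects, for each accident year `i`, the factors `s j`
with `I - i ≤ j < J`, which is Mack's formula. The error-propagation form is the same sum after
cancelling `(∑ u) ^ 2` against the denominators of `q_j(0) ^ 2`.
-/

open Finset

theorem Finset.sq_sum_eq_sum_sq_add_two_mul_sum_lt {ι R : Type*} [LinearOrder ι] [CommSemiring R]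
    (s : Finset ι) (f : ι → R) :
    (∑ i ∈ s, f i) ^ 2 = ∑ i ∈ s, f i ^ 2 + 2 * ∑ i ∈ s, ∑ k ∈ s with i < k, f i * f k := by
  induction s using Finset.induction_on_max with
  | empty => simp
  | insert m s hlt ih =>
    have hm : m ∉ s := fun h => lt_irrefl m (hlt m h)
    have hfilter : ∀ i ∈ s, (insert m s).filter (i < ·) = insert m (s.filter (i < ·)) :=
      fun i hi => by rw [filter_insert, if_pos (hlt i hi)]
    have hnot_mem : ∀ i ∈ s, m ∉ s.filter (i < ·) := fun i _ h => hm (mem_filter.1 h).1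
    have htop : (insert m s).filter (m < ·) = ∅ :=
      filter_false_of_mem fun k hk => not_lt.2 <| by
        rcases mem_insert.1 hk with rfl | hk
        exacts [le_rfl, (hlt k hk).le]
    have hcross : ∑ i ∈ insert m s, ∑ k ∈ insert m s with i < k, f i * f k
        = ∑ i ∈ s, f i * f m + ∑ i ∈ s, ∑ k ∈ s with i < k, f i * f k := by
      rw [sum_insert hm, htop, sum_empty, zero_add, ← sum_add_distrib]
      exact sum_congr rfl fun i hi => by rw [hfilter i hi, sum_insert (hnot_mem i hi)]
    rw [hcross, sum_insert hm, sum_insert hm, add_sq, ih, ← sum_mul]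
    ring

theorem Nat.sq_sum_Icc_eq {R : Type*} [CommSemiring R] (a b : ℕ) (f : ℕ → R) :
    (∑ i ∈ Icc a b, f i) ^ 2
      = ∑ i ∈ Icc a b, f i ^ 2 + 2 * ∑ i ∈ Icc a b, ∑ k ∈ Icc (i + 1) b, f i * f k := by
  rw [sq_sum_eq_sum_sq_add_two_mul_sum_lt]
  congr 2
  refine sum_congr rfl fun i hi => sum_congr ?_ fun _ _ => rfl
  ext k
  simp only [mem_filter, mem_Icc] at hi ⊢
  omega

theorem sum_range_sum_Icc_sub_comm {M : Type*} [AddCommMonoid M] {I J : ℕ} (hJI : J ≤ I)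
    (f : ℕ → ℕ → M) :
    ∑ j ∈ range J, ∑ i ∈ Icc (I - j) I, f j i
      = ∑ i ∈ Icc (I - J + 1) I, ∑ j ∈ Ico (I - i) J, f j i :=
  sum_comm' fun j i => by
    simp only [mem_range, mem_Icc, mem_Ico]
    omega

theorem sum_mul_sq_sum_Icc_sub_eq {R : Type*} [CommSemiring R] {I J : ℕ} (hJI : J ≤ I)
    (u s : ℕ → R) :
    ∑ j ∈ range J, s j * (∑ i ∈ Icc (I - j) I, u i) ^ 2
      = ∑ i ∈ Icc (I - J + 1) I, u i ^ 2 * (∑ j ∈ Ico (I - i) J, s j)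
        + 2 * ∑ i ∈ Icc (I - J + 1) I, ∑ k ∈ Icc (i + 1) I,
            u i * u k * (∑ j ∈ Ico (I - i) J, s j) := by
  set w : ℕ → R := fun i => u i ^ 2 + 2 * ∑ k ∈ Icc (i + 1) I, u i * u k
  have hexpand : ∀ j, s j * (∑ i ∈ Icc (I - j) I, u i) ^ 2 = ∑ i ∈ Icc (I - j) I, s j * w i :=
    fun j => by rw [Nat.sq_sum_Icc_eq, ← mul_sum, sum_add_distrib, ← mul_sum]
  calc ∑ j ∈ range J, s j * (∑ i ∈ Icc (I - j) I, u i) ^ 2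
      = ∑ i ∈ Icc (I - J + 1) I, w i * ∑ j ∈ Ico (I - i) J, s j := by
        simp only [hexpand, sum_range_sum_Icc_sub_comm hJI, mul_sum, mul_comm (s _)]
    _ = _ := by
        rw [mul_sum, ← sum_add_distrib]
        exact sum_congr rfl fun i _ => by rw [add_mul, mul_assoc, sum_mul]

theorem sq_mul_sum_div_sq_mul_eq {K ι : Type*} [Field K] {S : K} (hS : S ≠ 0) (t : Finset ι)
    (a s : ι → K) :
    S ^ 2 * ∑ j ∈ t, (a j / S) ^ 2 * s j = ∑ j ∈ t, s j * a j ^ 2 := by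
  rw [mul_sum]
  refine sum_congr rfl fun j _ => ?_
  field_simp

/-- the algebraic identity behind the equality of the error-propagation
estimate with Mack's chain-ladder parameter estimation error estimate.  In particular,
with u_i = Ĉ^CL_{i,J}, s_j = (σ̂_j²/f̂_j²)/Σ_ℓ C_{ℓ,j} and q_j(0) = Σ_{i=I-j}^I u_i / Σ_{i=1}^I u_i,
the error-propagation estimate coincides with Mack's estimate. -/
theorem error_propagation_equals_mack
    (I J : ℕ) (hIJ : I = J + 1) (u s : ℕ → ℝ) :
    (∑ j ∈ range J, s j * (∑ i ∈ Icc (I - j) I, u i) ^ 2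
      = ∑ i ∈ Icc (I - J + 1) I, u i ^ 2 * (∑ j ∈ Ico (I - i) J, s j)
        + 2 * ∑ i ∈ Icc (I - J + 1) I, ∑ k ∈ Icc (i + 1) I,
            u i * u k * (∑ j ∈ Ico (I - i) J, s j))
    ∧ ((∑ i ∈ Icc 1 I, u i) ≠ 0 →
        (∑ i ∈ Icc 1 I, u i) ^ 2 *
            ∑ j ∈ range J,
              ((∑ i ∈ Icc (I - j) I, u i) / (∑ i ∈ Icc 1 I, u i)) ^ 2 * s j
          = ∑ i ∈ Icc (I - J + 1) I, u i ^ 2 * (∑ j ∈ Ico (I - i) J, s j)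
            + 2 * ∑ i ∈ Icc (I - J + 1) I, ∑ k ∈ Icc (i + 1) I,
                u i * u k * (∑ j ∈ Ico (I - i) J, s j)) := by
  have mack := sum_mul_sq_sum_Icc_sub_eq (by omega : J ≤ I) u s
  exact ⟨mack, fun hS => by rw [sq_mul_sum_div_sq_mul_eq hS, mack]⟩
end
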